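/- Let p > 0, 0 < δ < p, λ > 0, μ > 0, q > 0, and fix z > 0. With the explicit Cramér–Lundberg scale functions, set A = A⁺_Y W^{(q)}(z) − (μλ/(p(p−δ)(q⁺(q)−q⁻(q))(q⁺_Y(q)−q⁻_Y(q)))) (e^{q⁺(q)z} − e^{q⁻(q)z}) and B = A⁻_Y W^{(q)}(z) − (μλ/(p(p−δ)(q⁺(q)−q⁻(q))(q⁺_Y(q)−q⁻_Y(q)))) (e^{q⁺(q)z} − e^{q⁻(q)z}). Then for all x ≥ 0: (p−δ)𝕎^{(q)}(x)W^{(q)}(z) − (1/(μλ))[(q+λ)W^{(q)}(z) − pW^{(q)′}(z)][(q+λ)𝕎^{(q)}(x) − (p−δ)𝕎^{(q)′}(x)] = A e^{q⁺_Y(q) x} − B e^{q⁻_Y(q) x}. -/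

import Mathlib

/- Cramér–Lundberg model with explicit q-scale functions.  The refracted scale
   function w^{(q)}(x;−z) can be written as A e^{q⁺_Y x} − B e^{q⁻_Y x} with
   the explicit constants A, B below. -/

noncomputable def qp (p lam μ q : ℝ) : ℝ :=
  (q + lam - μ * p + Real.sqrt ((q + lam - μ * p) ^ 2 + 4 * p * q * μ)) / (2 * p)

noncomputable def qm (p lam μ q : ℝ) : ℝ :=
  (q + lam - μ * p - Real.sqrt ((q + lam - μ * p) ^ 2 + 4 * p * q * μ)) / (2 * p)

noncomputable def Ap (p lam μ q : ℝ) : ℝ := (μ + qp p lam μ q) / (qp p lam μ q - qm p lam μ q)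

noncomputable def Am (p lam μ q : ℝ) : ℝ := (μ + qm p lam μ q) / (qp p lam μ q - qm p lam μ q)

/-- The q-scale function W^{(q)} of X (its formula on [0,∞)). -/
noncomputable def Wq (p lam μ q x : ℝ) : ℝ :=
  1 / p * (Ap p lam μ q * Real.exp (qp p lam μ q * x) -
    Am p lam μ q * Real.exp (qm p lam μ q * x))

/-- The q-scale function 𝕎^{(q)} of Y (its formula on [0,∞)). -/
noncomputable def WWq (p δ lam μ q x : ℝ) : ℝ := Wq (p - δ) lam μ q x

/-- The constant A. -/
noncomputable def Aconst (p δ lam μ q z : ℝ) : ℝ :=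
  Ap (p - δ) lam μ q * Wq p lam μ q z -
    μ * lam / (p * (p - δ) * (qp p lam μ q - qm p lam μ q) *
      (qp (p - δ) lam μ q - qm (p - δ) lam μ q)) *
      (Real.exp (qp p lam μ q * z) - Real.exp (qm p lam μ q * z))

/-- The constant B. -/
noncomputable def Bconst (p δ lam μ q z : ℝ) : ℝ :=
  Am (p - δ) lam μ q * Wq p lam μ q z -
    μ * lam / (p * (p - δ) * (qp p lam μ q - qm p lam μ q) *
      (qp (p - δ) lam μ q - qm (p - δ) lam μ q)) *
      (Real.exp (qp p lam μ q * z) - Real.exp (qm p lam μ q * z))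

lemma CL_diff_pos (p lam μ q : ℝ) (hp : 0 < p) (hμ : 0 < μ) (hq : 0 < q) :
    0 < qp p lam μ q - qm p lam μ q := by
  have hD : 0 < (q + lam - μ * p) ^ 2 + 4 * p * q * μ := by positivity
  have hs : 0 < Real.sqrt ((q + lam - μ * p) ^ 2 + 4 * p * q * μ) := Real.sqrt_pos.mpr hD
  unfold qp qm
  rw [div_sub_div_same]
  have : q + lam - μ * p + Real.sqrt ((q + lam - μ * p) ^ 2 + 4 * p * q * μ) -
      (q + lam - μ * p - Real.sqrt ((q + lam - μ * p) ^ 2 + 4 * p * q * μ)) =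
      2 * Real.sqrt ((q + lam - μ * p) ^ 2 + 4 * p * q * μ) := by ring
  rw [this]
  positivity

lemma CL_key_p (p lam μ q : ℝ) (hp : 0 < p) (hμ : 0 < μ) (hq : 0 < q) :
    (μ + qp p lam μ q) * ((q + lam) - p * qp p lam μ q) = lam * μ := by
  have hD : (0:ℝ) ≤ (q + lam - μ * p) ^ 2 + 4 * p * q * μ := by positivity
  have hs : Real.sqrt ((q + lam - μ * p) ^ 2 + 4 * p * q * μ) ^ 2
      = (q + lam - μ * p) ^ 2 + 4 * p * q * μ := Real.sq_sqrt hD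
  unfold qp
  field_simp
  nlinarith [hs, Real.sq_sqrt (show (0:ℝ) ≤ (q + lam - μ * p) ^ 2 + μ * q * p * 4 by positivity)]

lemma CL_key_m (p lam μ q : ℝ) (hp : 0 < p) (hμ : 0 < μ) (hq : 0 < q) :
    (μ + qm p lam μ q) * ((q + lam) - p * qm p lam μ q) = lam * μ := by
  have hD : (0:ℝ) ≤ (q + lam - μ * p) ^ 2 + 4 * p * q * μ := by positivity
  have hs : Real.sqrt ((q + lam - μ * p) ^ 2 + 4 * p * q * μ) ^ 2
      = (q + lam - μ * p) ^ 2 + 4 * p * q * μ := Real.sq_sqrt hD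
  unfold qm
  field_simp
  nlinarith [hs, Real.sq_sqrt (show (0:ℝ) ≤ (q + lam - μ * p) ^ 2 + μ * q * p * 4 by positivity)]

lemma CL_deriv_Wq (p lam μ q x : ℝ) :
    deriv (Wq p lam μ q) x = 1 / p * (Ap p lam μ q * (qp p lam μ q * Real.exp (qp p lam μ q * x)) -
      Am p lam μ q * (qm p lam μ q * Real.exp (qm p lam μ q * x))) := by
  have e1 : HasDerivAt (fun t => Real.exp (qp p lam μ q * t))
      (qp p lam μ q * Real.exp (qp p lam μ q * x)) x := by
    simpa [mul_comm] using ((hasDerivAt_id x).const_mul (qp p lam μ q)).exp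
  have e2 : HasDerivAt (fun t => Real.exp (qm p lam μ q * t))
      (qm p lam μ q * Real.exp (qm p lam μ q * x)) x := by
    simpa [mul_comm] using ((hasDerivAt_id x).const_mul (qm p lam μ q)).exp
  have : HasDerivAt (Wq p lam μ q)
      (1 / p * (Ap p lam μ q * (qp p lam μ q * Real.exp (qp p lam μ q * x)) -
        Am p lam μ q * (qm p lam μ q * Real.exp (qm p lam μ q * x)))) x := by
    unfold Wq
    exact (((e1.const_mul (Ap p lam μ q)).sub (e2.const_mul (Am p lam μ q))).const_mul (1/p))
  exact this.deriv

lemma CL_bracket (p lam μ q z : ℝ) (hp : 0 < p) (hlam : 0 < lam) (hμ : 0 < μ) (hq : 0 < q) :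
    (q + lam) * Wq p lam μ q z - p * deriv (Wq p lam μ q) z
      = lam * μ / (p * (qp p lam μ q - qm p lam μ q)) *
        (Real.exp (qp p lam μ q * z) - Real.exp (qm p lam μ q * z)) := by
  have h1 := CL_key_p p lam μ q hp hμ hq
  have h2 := CL_key_m p lam μ q hp hμ hq
  have hD : qp p lam μ q - qm p lam μ q ≠ 0 := (CL_diff_pos p lam μ q hp hμ hq).ne'
  rw [CL_deriv_Wq]
  unfold Wq Ap Am
  field_simp
  linear_combination Real.exp (qp p lam μ q * z) * h1 - Real.exp (qm p lam μ q * z) * h2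

theorem refracted_scale_function_CL_two_exponentials (p δ lam μ q : ℝ)
    (hp : 0 < p) (hδ : 0 < δ) (hδp : δ < p) (hlam : 0 < lam) (hμ : 0 < μ) (hq : 0 < q)
    (z : ℝ) (hz : 0 < z) :
    ∀ x : ℝ, 0 ≤ x →
      (p - δ) * WWq p δ lam μ q x * Wq p lam μ q z -
          1 / (μ * lam) *
            ((q + lam) * Wq p lam μ q z - p * deriv (Wq p lam μ q) z) *
            ((q + lam) * WWq p δ lam μ q x - (p - δ) * deriv (WWq p δ lam μ q) x)
        = Aconst p δ lam μ q z * Real.exp (qp (p - δ) lam μ q * x) -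
          Bconst p δ lam μ q z * Real.exp (qm (p - δ) lam μ q * x) := by
  intro x hx
  have hpd : 0 < p - δ := by linarith
  have hWW : WWq p δ lam μ q = Wq (p - δ) lam μ q := rfl
  rw [hWW]
  rw [CL_bracket p lam μ q z hp hlam hμ hq, CL_bracket (p - δ) lam μ q x hpd hlam hμ hq]
  have hDr : qp p lam μ q - qm p lam μ q ≠ 0 := (CL_diff_pos p lam μ q hp hμ hq).ne'
  have hDs : qp (p - δ) lam μ q - qm (p - δ) lam μ q ≠ 0 :=
    (CL_diff_pos (p - δ) lam μ q hpd hμ hq).ne'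
  unfold Aconst Bconst
  set Wz := Wq p lam μ q z
  unfold Wq Ap Am
  field_simp
  ring
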